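/- Let U ⊆ ℂ be an open set containing the closed unit disk {z : |z| ≤ 1}, and let f : ℂ → ℂ be holomorphic on U with |f(z)| = 1 for every z with |z| = 1. Then f agrees on the closed unit disk with a finite Blaschke product: there exist n ∈ ℕ, a constant C ∈ ℂ with |C| = 1, and complex numbers a_1, …, a_n with |a_i| < 1 such that f(z) = C · ∏_{i=1}^n (z − a_i)/(1 − conj(a_i)·z) for all z with |z| ≤ 1. -/

import Mathlib

/-!
The zeros of `f` in the closed disk are finitely many and lie in the open disk, since `‖f‖ = 1` on
the circle. Dividing out `∏ (z - aᵢ)` over them, with multiplicity, leaves a zero-free holomorphic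
`g`, and `h z = g z * ∏ (1 - conj aᵢ * z)` is zero-free on the closed disk with `‖h‖ = 1` on the
circle, because `‖1 - conj a * z‖ = ‖z - a‖` when `‖z‖ = 1`. The maximum modulus principle for `h`
and for `h⁻¹` makes `h` a unimodular constant `C`, i.e. `f = C · B` with `B` the Blaschke product.
-/

open Metric Set Filter Topology Function ComplexConjugate

section Factorization

variable {E : Type*} [NormedAddCommGroup E] [NormedSpace ℂ E] [CompleteSpace E]

theorem DifferentiableOn.iterate_dslope {f : ℂ → E} {V : Set ℂ} {a : ℂ} (hV : V ∈ 𝓝 a)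
    (hf : DifferentiableOn ℂ f V) (n : ℕ) : DifferentiableOn ℂ ((swap dslope a)^[n] f) V := by
  induction n with
  | zero => exact hf
  | succ n ih =>
    rw [iterate_succ_apply']
    exact (Complex.differentiableOn_dslope hV).mpr ih

theorem DifferentiableOn.exists_eq_sub_pow_smul {f : ℂ → E} {V : Set ℂ} {a : ℂ} (hV : V ∈ 𝓝 a)
    (hf : DifferentiableOn ℂ f V) (hfa : ¬ f =ᶠ[𝓝 a] 0) :
    ∃ (k : ℕ) (g : ℂ → E), DifferentiableOn ℂ g V ∧ g a ≠ 0 ∧ ∀ z, f z = (z - a) ^ k • g z := by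
  obtain ⟨p, hp⟩ := hf.analyticAt hV
  have hp0 : p ≠ 0 := fun hp0 => hfa (hp.locally_zero_iff.mpr hp0)
  exact ⟨p.order, _, hf.iterate_dslope hV _, hp.iterate_dslope_fslope_ne_zero hp0,
    hp.eq_pow_order_mul_iterate_dslope⟩

end Factorization

theorem AnalyticOnNhd.finite_setOf_eq_zero {𝕜 E : Type*} [NontriviallyNormedField 𝕜]
    [NormedAddCommGroup E] [NormedSpace 𝕜 E] {f : 𝕜 → E} {K : Set 𝕜}
    (hf : AnalyticOnNhd 𝕜 f K) (hK : IsCompact K) (hfK : ∀ z ∈ K, ¬ f =ᶠ[𝓝 z] 0) :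
    {z ∈ K | f z = 0}.Finite := by
  by_contra hinf
  obtain ⟨x, hxK, hacc⟩ := Set.Infinite.exists_accPt_of_subset_isCompact hinf hK (sep_subset _ _)
  have hfreq : ∃ᶠ z in 𝓝[≠] x, f z = 0 :=
    (accPt_iff_frequently_nhdsNE.mp hacc).mono fun _ hz => hz.2
  exact hfK x hxK ((hf x hxK).frequently_zero_iff_eventually_zero.mp hfreq)

theorem DifferentiableOn.exists_eq_multiset_prod_sub_mul {f : ℂ → ℂ} {V : Set ℂ} (hV : IsOpen V)
    (hf : DifferentiableOn ℂ f V) (S : Finset ℂ) (hSV : ↑S ⊆ V)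
    (hS : ∀ a ∈ S, ¬ f =ᶠ[𝓝 a] 0) :
    ∃ (m : Multiset ℂ) (g : ℂ → ℂ), DifferentiableOn ℂ g V ∧ (∀ a ∈ m, a ∈ S) ∧
      (∀ a ∈ S, g a ≠ 0) ∧ ∀ z, f z = (m.map (z - ·)).prod * g z := by
  classical
  induction S using Finset.induction_on with
  | empty => exact ⟨0, f, hf, by simp, by simp, by simp⟩
  | insert s S hsS ih =>
    obtain ⟨m, g, hg, hmS, hgS, hfg⟩ :=
      ih ((Finset.coe_subset.mpr (Finset.subset_insert s S)).trans hSV)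
        fun a ha => hS a (Finset.mem_insert_of_mem ha)
    have hgs : ¬ g =ᶠ[𝓝 s] 0 := fun hg0 =>
      hS s (Finset.mem_insert_self s S) <| hg0.mono fun z hz => by simp [hfg z, hz]
    obtain ⟨k, g', hg', hg's, hgg'⟩ :=
      hg.exists_eq_sub_pow_smul (hV.mem_nhds (hSV (Finset.mem_insert_self s S))) hgs
    refine ⟨Multiset.replicate k s + m, g', hg', ?_, ?_, fun z => ?_⟩
    · intro a ha
      rcases Multiset.mem_add.mp ha with ha | ha
      · simp [Multiset.eq_of_mem_replicate ha]
      · exact Finset.mem_insert_of_mem (hmS a ha)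
    · intro a ha
      rcases Finset.mem_insert.mp ha with rfl | ha
      · exact hg's
      · exact right_ne_zero_of_mul (hgg' a ▸ hgS a ha)
    · rw [hfg z, hgg' z, Multiset.map_add, Multiset.prod_add, Multiset.map_replicate,
        Multiset.prod_replicate, smul_eq_mul]
      ring

theorem Complex.norm_le_of_forall_mem_sphere_norm_le {h : ℂ → ℂ} {c : ℂ} {R C : ℝ} (hR : R ≠ 0)
    (hd : DiffContOnCl ℂ h (ball c R)) (hC : ∀ z ∈ sphere c R, ‖h z‖ ≤ C) {z : ℂ}
    (hz : z ∈ closedBall c R) : ‖h z‖ ≤ C :=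
  Complex.norm_le_of_forall_mem_frontier_norm_le isBounded_ball hd
    (fun w hw => hC w (frontier_ball c hR ▸ hw)) (closure_ball c hR ▸ hz)

theorem Complex.exists_norm_eq_one_eqOn_const {h : ℂ → ℂ} {c : ℂ} {R : ℝ} (hR : 0 < R)
    (hd : DiffContOnCl ℂ h (ball c R)) (h0 : ∀ z ∈ closedBall c R, h z ≠ 0)
    (h1 : ∀ z ∈ sphere c R, ‖h z‖ = 1) :
    ∃ C : ℂ, ‖C‖ = 1 ∧ EqOn h (const ℂ C) (closedBall c R) := by
  have hc : c ∈ closedBall c R := mem_closedBall_self hR.le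
  have hle : ∀ z ∈ closedBall c R, ‖h z‖ ≤ 1 := fun z hz =>
    norm_le_of_forall_mem_sphere_norm_le hR.ne' hd (fun w hw => (h1 w hw).le) hz
  -- Applied to `h⁻¹`, the maximum modulus principle is a minimum modulus principle for `h`.
  have hinv : ‖(h c)⁻¹‖ ≤ 1 :=
    norm_le_of_forall_mem_sphere_norm_le hR.ne'
      (hd.inv fun z hz => h0 z (closure_ball c hR.ne' ▸ hz)) (fun w hw => by simp [h1 w hw]) hc
  have hhc : ‖h c‖ = 1 := by
    have := norm_pos_iff.mpr (h0 c hc)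
    rw [norm_inv, inv_le_one₀ this] at hinv
    exact le_antisymm (hle c hc) hinv
  refine ⟨h c, hhc, Complex.eqOn_closedBall_of_isMaxOn_norm hd fun z hz => ?_⟩
  simpa [hhc] using hle z (ball_subset_closedBall hz)

theorem Complex.norm_one_sub_conj_mul_eq_norm_sub (a : ℂ) {z : ℂ} (hz : ‖z‖ = 1) :
    ‖1 - conj a * z‖ = ‖z - a‖ := by
  have hzz : z * conj z = 1 := by
    rw [Complex.mul_conj, Complex.normSq_eq_norm_sq, hz]; norm_num
  calc ‖1 - conj a * z‖ = ‖z * conj (1 - conj a * z)‖ := by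
        rw [norm_mul, RCLike.norm_conj, hz, one_mul]
    _ = ‖z - a‖ := by
        rw [map_sub, map_one, map_mul, Complex.conj_conj, mul_sub, mul_one, mul_left_comm, hzz,
          mul_one]

theorem Complex.one_sub_conj_mul_ne_zero {a z : ℂ} (ha : ‖a‖ < 1) (hz : ‖z‖ ≤ 1) :
    1 - conj a * z ≠ 0 := by
  refine sub_ne_zero.mpr fun h => ?_
  have : ‖conj a * z‖ < 1 := by
    rw [norm_mul, RCLike.norm_conj]
    nlinarith [norm_nonneg a, norm_nonneg z]
  simp [← h] at this

theorem Complex.exists_eqOn_mul_blaschke {n : ℕ} {a : Fin n → ℂ} (ha : ∀ i, ‖a i‖ < 1)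
    {g : ℂ → ℂ} (hg : DiffContOnCl ℂ g (ball 0 1)) (hg0 : ∀ z ∈ closedBall (0 : ℂ) 1, g z ≠ 0)
    (hmod : ∀ z ∈ sphere (0 : ℂ) 1, ‖(∏ i, (z - a i)) * g z‖ = 1) :
    ∃ C : ℂ, ‖C‖ = 1 ∧ ∀ z ∈ closedBall (0 : ℂ) 1,
      (∏ i, (z - a i)) * g z = C * ∏ i, (z - a i) / (1 - conj (a i) * z) := by
  have hden : ∀ z ∈ closedBall (0 : ℂ) 1, ∏ i, (1 - conj (a i) * z) ≠ 0 := fun z hz =>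
    Finset.prod_ne_zero_iff.mpr fun i _ =>
      one_sub_conj_mul_ne_zero (ha i) (mem_closedBall_zero_iff.mp hz)
  obtain ⟨C, hC, hgC⟩ :=
    exists_norm_eq_one_eqOn_const (h := fun z => g z * ∏ i, (1 - conj (a i) * z)) one_pos
      (hg.smul (Differentiable.diffContOnCl (by fun_prop)))
      (fun z hz => mul_ne_zero (hg0 z hz) (hden z hz)) fun z hz => by
        rw [← hmod z hz, norm_mul, norm_mul, norm_prod, norm_prod, mul_comm]
        congr 1
        exact Finset.prod_congr rfl fun i _ =>
          norm_one_sub_conj_mul_eq_norm_sub _ (mem_sphere_zero_iff_norm.mp hz)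
  refine ⟨C, hC, fun z hz => ?_⟩
  have hCz : C = g z * ∏ i, (1 - conj (a i) * z) := (hgC hz).symm
  rw [Finset.prod_div_distrib, hCz, mul_div_assoc', eq_div_iff (hden z hz)]
  ring

theorem stmt_17 (U : Set ℂ) (hU : IsOpen U)
    (hUD : Metric.closedBall (0 : ℂ) 1 ⊆ U)
    (f : ℂ → ℂ) (hf : DifferentiableOn ℂ f U)
    (hmod : ∀ z : ℂ, ‖z‖ = 1 → ‖f z‖ = 1) :
    ∃ (n : ℕ) (C : ℂ) (a : Fin n → ℂ),
      ‖C‖ = 1 ∧ (∀ i, ‖a i‖ < 1) ∧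
      ∀ z ∈ Metric.closedBall (0 : ℂ) 1,
        f z = C * ∏ i, (z - a i) / (1 - (starRingEnd ℂ) (a i) * z) := by
  obtain ⟨δ, hδ, hδU⟩ := (isCompact_closedBall (0 : ℂ) 1).exists_thickening_subset_open hU hUD
  rw [thickening_closedBall hδ zero_le_one] at hδU
  have hfV : DifferentiableOn ℂ f (ball 0 (δ + 1)) := hf.mono hδU
  have hDV : closedBall (0 : ℂ) 1 ⊆ ball 0 (δ + 1) := closedBall_subset_ball (by linarith)
  have hf_ne : ∀ z ∈ ball (0 : ℂ) (δ + 1), ¬ f =ᶠ[𝓝 z] 0 := fun z hz hz0 => by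
    have h1 := (hfV.analyticOnNhd isOpen_ball).eqOn_zero_of_preconnected_of_eventuallyEq_zero
      (convex_ball 0 _).isPreconnected hz hz0 (hDV (by simp : (1 : ℂ) ∈ closedBall 0 1))
    simpa [h1] using hmod 1 (by simp)
  have hZ := ((hfV.analyticOnNhd isOpen_ball).mono hDV).finite_setOf_eq_zero
    (isCompact_closedBall 0 1) fun z hz => hf_ne z (hDV hz)
  obtain ⟨m, g, hg, hmZ, hgZ, hfg⟩ := hfV.exists_eq_multiset_prod_sub_mul isOpen_ball hZ.toFinset
    (fun z hz => hDV (hZ.mem_toFinset.mp hz).1)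
    fun z hz => hf_ne z (hDV (hZ.mem_toFinset.mp hz).1)
  have hm : ∀ a ∈ m, ‖a‖ < 1 := fun a ha => by
    obtain ⟨ha1, hfa⟩ := hZ.mem_toFinset.mp (hmZ a ha)
    refine (mem_closedBall_zero_iff.mp ha1).lt_of_ne fun ha1 => ?_
    simpa [hfa] using hmod a ha1
  have hg0 : ∀ z ∈ closedBall (0 : ℂ) 1, g z ≠ 0 := fun z hz hgz =>
    hgZ z (hZ.mem_toFinset.mpr ⟨hz, by simp [hfg z, hgz]⟩) hgz
  set a : Fin m.toList.length → ℂ := fun i => m.toList[i]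
  have ha : ∀ i, ‖a i‖ < 1 := fun i => hm _ (Multiset.mem_toList.mp (List.getElem_mem _))
  have hfa : ∀ z, f z = (∏ i, (z - a i)) * g z := fun z => by
    simp [a, hfg z, Fin.prod_univ_fun_getElem]
  obtain ⟨C, hC, hfC⟩ := Complex.exists_eqOn_mul_blaschke ha (hg.diffContOnCl_ball hDV) hg0
    fun z hz => by rw [← hfa]; exact hmod z (by simpa using hz)
  exact ⟨_, C, a, hC, ha, fun z hz => (hfa z).trans (hfC z hz)⟩
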